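/- arXiv:2310.03600 — 2 statements merged into one kernel-verified Lean document; each statement's English description precedes it below -/
import Mathlib

section
/- Let 1 < p < ∞ and β > 1. For all real numbers a, b, one has (J_{β+1}(a) - J_{β+1}(b))·(a - b) ≥ (1/2)(|a|^{β-1} + |b|^{β-1})·|a - b|², where J_q(t) = |t|^{q-2} t. -/
noncomputable def J (q t : ℝ) : ℝ := |t| ^ (q - 2) * t

theorem stmt_0 (p β : ℝ) (hp : 1 < p) (hβ : 1 < β) (a b : ℝ) :
    (J (β + 1) a - J (β + 1) b) * (a - b) ≥
      (1 / 2) * (|a| ^ (β - 1) + |b| ^ (β - 1)) * |a - b| ^ 2 := by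
  have hA : (0:ℝ) ≤ |a| := abs_nonneg a
  have hB : (0:ℝ) ≤ |b| := abs_nonneg b
  have key : (|a| ^ (β - 1) - |b| ^ (β - 1)) * (|a| ^ 2 - |b| ^ 2) ≥ 0 := by
    rcases le_total |a| |b| with h | h
    · have h1 : |a| ^ (β - 1) ≤ |b| ^ (β - 1) :=
        Real.rpow_le_rpow hA h (by linarith)
      have h2 : |a| ^ 2 ≤ |b| ^ 2 := by nlinarith
      nlinarith
    · have h1 : |b| ^ (β - 1) ≤ |a| ^ (β - 1) :=
        Real.rpow_le_rpow hB h (by linarith)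
      have h2 : |b| ^ 2 ≤ |a| ^ 2 := by nlinarith
      nlinarith
  unfold J
  have e : β + 1 - 2 = β - 1 := by ring
  rw [e]
  rw [sq_abs a, sq_abs b] at key
  set A := |a| ^ (β - 1)
  set B := |b| ^ (β - 1)
  have h1 : (A * a - B * b) * (a - b) - 1 / 2 * (A + B) * |a - b| ^ 2
      = 1 / 2 * (A - B) * (a ^ 2 - b ^ 2) := by
    rw [sq_abs]; ring
  linarith
end

section
/- Let 1 < p < 2 and let a, c ∈ ℝ^n. Then (p-1)·|a - c|² / (|a| + |c|)^{2-p} ≤ (|a|^{p-2} a - |c|^{p-2} c) · (a - c), where · denotes the Euclidean inner product and |·| the Euclidean norm (interpreting the left side as 0 when a = c = 0). -/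
/-!
Write `A = ‖a‖`, `C = ‖c‖` and `t = ⟪a, c⟫`. Both sides of the inequality are affine in `t`, which
ranges over `[-A C, A C]`, so it suffices to check the two endpoints, i.e. collinear `a` and `c`.
At `t = A C` this is the concavity of `x ↦ x ^ (p - 1)` (its tangent line at the larger of `A`, `C`)
combined with `(A + C) ^ (p - 2) ≤ max A C ^ (p - 2)`; at `t = -A C` it is the subadditivity of
`x ↦ x ^ (p - 1)`.
-/

open Real

lemma rpow_sub_one_eq_rpow_sub_two_mul {x p : ℝ} (hx : 0 ≤ x) (hp : p ≠ 1) :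
    x ^ (p - 1) = x ^ (p - 2) * x := by
  rw [← rpow_add_one' hx (by contrapose! hp; linarith)]
  ring_nf

lemma rpow_le_rpow_add_mul_rpow_sub_one_mul_sub {q x y : ℝ} (hq0 : 0 ≤ q) (hq1 : q ≤ 1)
    (hx : 0 < x) (hy : 0 ≤ y) :
    y ^ q ≤ x ^ q + q * x ^ (q - 1) * (y - x) := by
  have amgm : y ^ q * x ^ (1 - q) ≤ q * y + (1 - q) * x :=
    geom_mean_le_arith_mean2_weighted hq0 (sub_nonneg.2 hq1) hy hx.le (add_sub_cancel q 1)
  have hinv : x ^ (1 - q) * x ^ (q - 1) = 1 := by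
    rw [← rpow_add hx, sub_add_sub_cancel', sub_self, rpow_zero]
  have hmul : x ^ (q - 1) * x = x ^ q := by
    rw [← rpow_add_one hx.ne', sub_add_cancel]
  calc y ^ q = y ^ q * x ^ (1 - q) * x ^ (q - 1) := by rw [mul_assoc, hinv, mul_one]
    _ ≤ (q * y + (1 - q) * x) * x ^ (q - 1) := by gcongr
    _ = x ^ q + q * x ^ (q - 1) * (y - x) := by rw [← hmul]; ring

lemma sub_one_mul_add_rpow_mul_sub_le_rpow_sub_rpow {p A C : ℝ} (hp1 : 1 ≤ p) (hp2 : p ≤ 2)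
    (hC : 0 ≤ C) (hCA : C ≤ A) :
    (p - 1) * (A + C) ^ (p - 2) * (A - C) ≤ A ^ (p - 1) - C ^ (p - 1) := by
  rcases hCA.eq_or_lt with rfl | hlt
  · simp
  have hA : 0 < A := hC.trans_lt hlt
  have tangent := rpow_le_rpow_add_mul_rpow_sub_one_mul_sub (q := p - 1) (by linarith)
    (by linarith) hA hC
  rw [show p - 1 - 1 = p - 2 by ring] at tangent
  have hmono : (A + C) ^ (p - 2) ≤ A ^ (p - 2) :=
    rpow_le_rpow_of_nonpos hA (by linarith) (by linarith)
  calc (p - 1) * (A + C) ^ (p - 2) * (A - C) ≤ (p - 1) * A ^ (p - 2) * (A - C) := by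
        gcongr
    _ ≤ A ^ (p - 1) - C ^ (p - 1) := by linarith

lemma sub_one_mul_sub_sq_mul_add_rpow_le {p A C : ℝ} (hp1 : 1 ≤ p) (hp2 : p ≤ 2)
    (hA : 0 ≤ A) (hC : 0 ≤ C) :
    (p - 1) * (A - C) ^ 2 * (A + C) ^ (p - 2) ≤ (A - C) * (A ^ (p - 1) - C ^ (p - 1)) := by
  rcases le_total C A with hCA | hAC
  · calc (p - 1) * (A - C) ^ 2 * (A + C) ^ (p - 2)
          = (A - C) * ((p - 1) * (A + C) ^ (p - 2) * (A - C)) := by ring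
      _ ≤ (A - C) * (A ^ (p - 1) - C ^ (p - 1)) :=
        mul_le_mul_of_nonneg_left (sub_one_mul_add_rpow_mul_sub_le_rpow_sub_rpow hp1 hp2 hC hCA)
          (sub_nonneg.2 hCA)
  · calc (p - 1) * (A - C) ^ 2 * (A + C) ^ (p - 2)
          = (C - A) * ((p - 1) * (C + A) ^ (p - 2) * (C - A)) := by rw [add_comm]; ring
      _ ≤ (C - A) * (C ^ (p - 1) - A ^ (p - 1)) :=
        mul_le_mul_of_nonneg_left (sub_one_mul_add_rpow_mul_sub_le_rpow_sub_rpow hp1 hp2 hA hAC)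
          (sub_nonneg.2 hAC)
      _ = (A - C) * (A ^ (p - 1) - C ^ (p - 1)) := by ring

lemma sub_one_mul_add_sq_mul_add_rpow_le {p A C : ℝ} (hp1 : 1 < p) (hp2 : p ≤ 2)
    (hA : 0 ≤ A) (hC : 0 ≤ C) :
    (p - 1) * (A + C) ^ 2 * (A + C) ^ (p - 2) ≤ (A + C) * (A ^ (p - 1) + C ^ (p - 1)) := by
  have hAC : 0 ≤ A + C := add_nonneg hA hC
  calc (p - 1) * (A + C) ^ 2 * (A + C) ^ (p - 2) = (A + C) * ((p - 1) * (A + C) ^ (p - 1)) := by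
        rw [rpow_sub_one_eq_rpow_sub_two_mul hAC hp1.ne']; ring
    _ ≤ (A + C) * (A + C) ^ (p - 1) := by
        gcongr
        exact mul_le_of_le_one_left (rpow_nonneg hAC _) (by linarith)
    _ ≤ (A + C) * (A ^ (p - 1) + C ^ (p - 1)) := by
        gcongr
        exact rpow_add_le_add_rpow hA hC (by linarith) (by linarith)

lemma mul_le_of_abs_le {α β t u : ℝ} (h₁ : β * u ≤ α) (h₂ : -(β * u) ≤ α) (ht : |t| ≤ u) :
    β * t ≤ α := by
  have hβt : β * t ≤ |β| * u :=
    (le_abs_self _).trans (abs_mul β t ▸ mul_le_mul_of_nonneg_left ht (abs_nonneg β))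
  rcases abs_choice β with h | h <;> rw [h] at hβt <;> linarith

lemma sub_one_mul_mul_rpow_le_of_abs_le {p A C t : ℝ} (hp1 : 1 < p) (hp2 : p ≤ 2)
    (hA : 0 ≤ A) (hC : 0 ≤ C) (ht : |t| ≤ A * C) :
    (p - 1) * (A ^ 2 - 2 * t + C ^ 2) * (A + C) ^ (p - 2) ≤
      A ^ (p - 2) * A ^ 2 + C ^ (p - 2) * C ^ 2 - (A ^ (p - 2) + C ^ (p - 2)) * t := by
  have at_max := sub_one_mul_sub_sq_mul_add_rpow_le hp1.le hp2 hA hC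
  have at_min := sub_one_mul_add_sq_mul_add_rpow_le hp1 hp2 hA hC
  rw [rpow_sub_one_eq_rpow_sub_two_mul hA hp1.ne', rpow_sub_one_eq_rpow_sub_two_mul hC hp1.ne']
    at at_max at_min
  have := mul_le_of_abs_le (t := t)
    (β := A ^ (p - 2) + C ^ (p - 2) - 2 * (p - 1) * (A + C) ^ (p - 2))
    (α := A ^ (p - 2) * A ^ 2 + C ^ (p - 2) * C ^ 2 - (p - 1) * (A ^ 2 + C ^ 2) * (A + C) ^ (p - 2))
    (by linear_combination at_max) (by linear_combination at_min) ht
  linear_combination this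

lemma inner_smul_sub_smul_sub {E : Type*} [NormedAddCommGroup E] [InnerProductSpace ℝ E]
    (s r : ℝ) (x y : E) :
    inner ℝ (s • x - r • y) (x - y) = s * ‖x‖ ^ 2 + r * ‖y‖ ^ 2 - (s + r) * inner ℝ x y := by
  simp only [inner_sub_left, inner_sub_right, real_inner_smul_left, real_inner_self_eq_norm_sq,
    real_inner_comm x y]
  ring

theorem stmt_2 (n : ℕ) (p : ℝ) (hp1 : 1 < p) (hp2 : p < 2)
    (a c : EuclideanSpace ℝ (Fin n)) :
    (p - 1) * ‖a - c‖ ^ 2 / (‖a‖ + ‖c‖) ^ (2 - p) ≤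
      inner ℝ ((‖a‖ ^ (p - 2)) • a - (‖c‖ ^ (p - 2)) • c) (a - c) := by
  -- `rpow_neg` holds at `‖a‖ + ‖c‖ = 0` too, where both `0⁻¹` and `0 ^ (p - 2)` are junk `0`
  rw [norm_sub_sq_real, inner_smul_sub_smul_sub, div_eq_mul_inv, ← rpow_neg (by positivity),
    neg_sub]
  exact sub_one_mul_mul_rpow_le_of_abs_le hp1 hp2.le (norm_nonneg a) (norm_nonneg c)
    (abs_real_inner_le_norm a c)
end
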